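/- Let Ω ⊆ ℝ^N be a nonempty bounded open set, let L ≥ 0, and let u : ℝ^N → ℝ satisfy: u(x) = 0 for every x ∉ Ω; u is continuously differentiable on Ω with ‖∇u(x)‖ ≤ L for every x ∈ Ω; and for every ε > 0 there exists an open set V ⊆ ℝ^N with ∂Ω ⊆ V such that |u(x)| < ε for all x ∈ V ∩ Ω. Then u is Lipschitz continuous on ℝ^N with Lipschitz constant L, i.e. |u(x) − u(y)| ≤ L·|x − y| for all x, y ∈ ℝ^N. -/

import Mathlib

/-!
On a segment contained in `Ω` the mean value theorem gives the bound. Otherwise the segment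
`[x, y]` meets `Ωᶜ` at some `p`, and it suffices to show `‖u x‖ ≤ L * dist x p` for every
`p ∉ Ω`. Follow the segment from `x` to `p` up to its first point `q` outside `Ω`: the half-open
segment `[x, q)` lies in `Ω`, where `u` is `L`-Lipschitz, and `q ∈ ∂Ω`, where `u` tends to `0`.
-/

open Set Filter Topology

theorem Continuous.exists_first_mem_frontier {X : Type*} [TopologicalSpace X] {Ω : Set X}
    (hΩ : IsOpen Ω) {γ : ℝ → X} (hγ : Continuous γ) (h0 : γ 0 ∈ Ω) (h1 : γ 1 ∉ Ω) :
    ∃ t ∈ Ioc (0 : ℝ) 1, γ t ∈ frontier Ω ∧ MapsTo γ (Ico 0 t) Ω := by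
  set S := Icc (0 : ℝ) 1 ∩ γ ⁻¹' Ωᶜ
  have hbdd : BddBelow S := ⟨0, fun s hs => hs.1.1⟩
  have hS : sInf S ∈ S :=
    (isClosed_Icc.inter (hΩ.isClosed_compl.preimage hγ)).csInf_mem
      ⟨1, show (1 : ℝ) ∈ S from ⟨right_mem_Icc.mpr zero_le_one, h1⟩⟩ hbdd
  set t := sInf S
  have hpos : 0 < t := hS.1.1.lt_of_ne fun h => hS.2 (h ▸ h0)
  have hmaps : MapsTo γ (Ico 0 t) Ω := fun s hs => by
    by_contra hs'
    exact (csInf_le hbdd (show s ∈ S from ⟨⟨hs.1, hs.2.le.trans hS.1.2⟩, hs'⟩)).not_gt hs.2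
  refine ⟨t, ⟨hpos, hS.1.2⟩, ?_, hmaps⟩
  rw [hΩ.frontier_eq]
  have hleft : Tendsto γ (𝓝[<] t) (𝓝 (γ t)) := hγ.continuousAt.tendsto.mono_left nhdsWithin_le_nhds
  refine mem_sdiff_of_mem (mem_closure_of_tendsto hleft ?_) hS.2
  filter_upwards [Ioo_mem_nhdsLT hpos] with s hs using hmaps (Ioo_subset_Ico_self hs)

section

variable {E F : Type*} [NormedAddCommGroup E] [NormedSpace ℝ E] [NormedAddCommGroup F]
  [NormedSpace ℝ F] {Ω : Set E} {u : E → F} {L : ℝ}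

theorem norm_le_mul_dist_of_notMem (hΩ : IsOpen Ω) (hL : 0 ≤ L) (hu_zero : ∀ x ∉ Ω, u x = 0)
    (hdiff : ∀ z ∈ Ω, DifferentiableAt ℝ u z) (hbound : ∀ z ∈ Ω, ‖fderiv ℝ u z‖ ≤ L)
    (hfrontier : ∀ q ∈ frontier Ω, Tendsto u (𝓝[Ω] q) (𝓝 0)) (x : E) {p : E} (hp : p ∉ Ω) :
    ‖u x‖ ≤ L * dist x p := by
  by_cases hx : x ∉ Ω
  · rw [hu_zero x hx, norm_zero]
    positivity
  set γ : ℝ → E := ⇑(AffineMap.lineMap (k := ℝ) x p)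
  have hγ : Continuous γ := AffineMap.lineMap_continuous
  obtain ⟨t, ⟨ht0, ht1⟩, hq, hmaps⟩ :=
    hγ.exists_first_mem_frontier hΩ (by simpa [γ] using hx) (by simpa [γ] using hp)
  have hconv : Convex ℝ (γ '' Ico 0 t) := (convex_Ico 0 t).affine_image _
  have hγ0 : γ 0 = x := AffineMap.lineMap_apply_zero x p
  have hclose : ∀ s ∈ Ico 0 t, ‖u x‖ ≤ ‖u (γ s)‖ + L * (s * dist x p) := fun s hs => by
    have hmvt := hconv.norm_image_sub_le_of_norm_fderiv_le
      (fun z hz => hdiff z (hmaps.image_subset hz)) (fun z hz => hbound z (hmaps.image_subset hz))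
      (mem_image_of_mem γ hs) (mem_image_of_mem γ ⟨le_rfl, ht0⟩)
    have hdist : ‖x - γ s‖ = s * dist x p := by
      rw [← dist_eq_norm, dist_comm]
      exact (dist_lineMap_left x p s).trans (by rw [Real.norm_of_nonneg hs.1])
    rw [hγ0, hdist] at hmvt
    calc ‖u x‖ ≤ ‖u (γ s)‖ + ‖u x - u (γ s)‖ := norm_le_insert' _ _
      _ ≤ ‖u (γ s)‖ + L * (s * dist x p) := by gcongr
  have hIco : ∀ᶠ s in 𝓝[<] t, s ∈ Ico 0 t :=
    mem_of_superset (Ioo_mem_nhdsLT ht0) Ioo_subset_Ico_self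
  have hγ_lim : Tendsto γ (𝓝[<] t) (𝓝[Ω] γ t) :=
    tendsto_nhdsWithin_iff.mpr ⟨hγ.continuousAt.tendsto.mono_left nhdsWithin_le_nhds,
      hIco.mono fun s hs => hmaps hs⟩
  have hlim : Tendsto (fun s => ‖u (γ s)‖ + L * (s * dist x p)) (𝓝[<] t)
      (𝓝 (0 + L * (t * dist x p))) :=
    (tendsto_zero_iff_norm_tendsto_zero.mp ((hfrontier _ hq).comp hγ_lim)).add
      ((tendsto_nhdsWithin_of_tendsto_nhds tendsto_id).mul_const _ |>.const_mul L)
  calc ‖u x‖ ≤ 0 + L * (t * dist x p) :=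
        ge_of_tendsto hlim (hIco.mono hclose)
    _ ≤ L * dist x p := by
        rw [zero_add]
        exact mul_le_mul_of_nonneg_left (mul_le_of_le_one_left dist_nonneg ht1) hL

theorem lipschitzWith_of_eq_zero_off_of_tendsto_zero_at_frontier (hΩ : IsOpen Ω) (hL : 0 ≤ L)
    (hu_zero : ∀ x ∉ Ω, u x = 0) (hdiff : ∀ z ∈ Ω, DifferentiableAt ℝ u z)
    (hbound : ∀ z ∈ Ω, ‖fderiv ℝ u z‖ ≤ L)
    (hfrontier : ∀ q ∈ frontier Ω, Tendsto u (𝓝[Ω] q) (𝓝 0)) :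
    LipschitzWith ⟨L, hL⟩ u := by
  refine LipschitzWith.of_dist_le_mul fun x y => ?_
  rw [dist_eq_norm, dist_eq_norm]
  by_cases hseg : segment ℝ y x ⊆ Ω
  · exact (convex_segment y x).norm_image_sub_le_of_norm_fderiv_le
      (fun z hz => hdiff z (hseg hz)) (fun z hz => hbound z (hseg hz))
      (left_mem_segment ℝ y x) (right_mem_segment ℝ y x)
  obtain ⟨p, hp_seg, hp⟩ := not_subset.mp hseg
  have hboundary := norm_le_mul_dist_of_notMem hΩ hL hu_zero hdiff hbound hfrontier
  calc ‖u x - u y‖ ≤ ‖u x‖ + ‖u y‖ := norm_sub_le _ _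
    _ ≤ L * dist x p + L * dist y p := add_le_add (hboundary x hp) (hboundary y hp)
    _ = L * ‖x - y‖ := by
        rw [← mul_add, add_comm, dist_comm x p, dist_add_dist_of_mem_segment hp_seg, dist_comm y x,
          dist_eq_norm]

end

theorem lipschitz_extension_by_zero_general
    (N : ℕ)
    (Ω : Set (EuclideanSpace ℝ (Fin N)))
    (hΩop : IsOpen Ω)
    (L : ℝ) (hL : 0 ≤ L)
    (u : EuclideanSpace ℝ (Fin N) → ℝ)
    (hu_zero : ∀ x, x ∉ Ω → u x = 0)
    (hu_c1 : ContDiffOn ℝ 1 u Ω)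
    (hu_grad : ∀ x ∈ Ω, ‖gradient u x‖ ≤ L)
    (hbc : ∀ ε > 0, ∃ V : Set (EuclideanSpace ℝ (Fin N)), IsOpen V ∧ frontier Ω ⊆ V ∧
      ∀ x ∈ V ∩ Ω, |u x| < ε) :
    ∀ x y : EuclideanSpace ℝ (Fin N), |u x - u y| ≤ L * ‖x - y‖ := by
  have hdiff : ∀ z ∈ Ω, DifferentiableAt ℝ u z := fun z hz =>
    (hu_c1.differentiableOn one_ne_zero).differentiableAt (hΩop.mem_nhds hz)
  have hbound : ∀ z ∈ Ω, ‖fderiv ℝ u z‖ ≤ L := fun z hz => by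
    simpa [gradient] using hu_grad z hz
  have hfrontier : ∀ q ∈ frontier Ω, Tendsto u (𝓝[Ω] q) (𝓝 0) := fun q hq =>
    Metric.tendsto_nhds.mpr fun ε hε => by
      obtain ⟨V, hV, hΩV, hsmall⟩ := hbc ε hε
      filter_upwards [inter_mem_nhdsWithin Ω (hV.mem_nhds (hΩV hq))] with x hx
      simpa using hsmall x ⟨hx.2, hx.1⟩
  intro x y
  have h := (lipschitzWith_of_eq_zero_off_of_tendsto_zero_at_frontier hΩop hL hu_zero hdiff
    hbound hfrontier).dist_le_mul x y
  change dist (u x) (u y) ≤ L * dist x y at h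
  rwa [Real.dist_eq, dist_eq_norm] at h

/-- A function vanishing outside `Ω`, `C¹` on `Ω` with gradient bounded by `L`, and
tending to `0` uniformly at `∂Ω`, is globally Lipschitz with constant `L`. -/
theorem lipschitz_extension_by_zero
    (N : ℕ)
    (Ω : Set (EuclideanSpace ℝ (Fin N)))
    (hΩne : Ω.Nonempty) (hΩbd : Bornology.IsBounded Ω) (hΩop : IsOpen Ω)
    (L : ℝ) (hL : 0 ≤ L)
    (u : EuclideanSpace ℝ (Fin N) → ℝ)
    (hu_zero : ∀ x, x ∉ Ω → u x = 0)
    (hu_c1 : ContDiffOn ℝ 1 u Ω)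
    (hu_grad : ∀ x ∈ Ω, ‖gradient u x‖ ≤ L)
    (hbc : ∀ ε > 0, ∃ V : Set (EuclideanSpace ℝ (Fin N)), IsOpen V ∧ frontier Ω ⊆ V ∧
      ∀ x ∈ V ∩ Ω, |u x| < ε) :
    ∀ x y : EuclideanSpace ℝ (Fin N), |u x - u y| ≤ L * ‖x - y‖ :=
  lipschitz_extension_by_zero_general N Ω hΩop L hL u hu_zero hu_c1 hu_grad hbc
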